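/- arXiv:2311.07629 — 2 statements merged into one kernel-verified Lean document; each statement's English description precedes it below -/
import Mathlib

section
/- Let G be a d-regular simple graph on n vertices whose adjacency-matrix eigenvalues λ₁ ≥ λ₂ ≥ ⋯ ≥ λₙ satisfy 0 ≤ λ₂ ≤ √(d/2). Then λ₂ · ((d − λ₂)² + 2·n·λ₂) ≥ d·(n − 2d). -/
/-!
The adjacency eigenvalues of a `d`-regular graph are all `≤ d` and have power sums
`∑ λᵢ = tr A = 0`, `∑ λᵢ² = tr A² = n d` and `∑ λᵢ³ = tr A³ ≥ 0` (closed walks).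
The cubic `p x = (x - λ₂) ((1 + λ₂) x + d)²` is `≤ 0` at every eigenvalue but the top one,
where it is at most `p d`. Summing `p` over the spectrum and expanding in power sums gives
`n d (2d + dλ₂ - λ₂(1 + λ₂)²) ≤ (d - λ₂) d² (2 + λ₂)²`, and for `2λ₂² ≤ d` this implies the
claimed bound through an explicit polynomial identity.
-/

open Finset Matrix

theorem Matrix.IsHermitian.trace_pow_eq_sum_eigenvalues_pow {𝕜 n : Type*} [RCLike 𝕜] [Fintype n]
    [DecidableEq n] {A : Matrix n n 𝕜} (hA : A.IsHermitian) (k : ℕ) :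
    (A ^ k).trace = ∑ i, (hA.eigenvalues i : 𝕜) ^ k := by
  conv_lhs => rw [hA.spectral_theorem, ← map_pow, Unitary.conjStarAlgAut_apply, trace_mul_cycle,
    Unitary.coe_star_mul_self, one_mul, diagonal_pow, trace_diagonal]
  simp

namespace SimpleGraph

variable {V : Type*} [Fintype V] [DecidableEq V] {G : SimpleGraph V} [DecidableRel G.Adj] {d : ℕ}

theorem IsRegularOfDegree.eigenvalues_adjMatrix_le (hreg : G.IsRegularOfDegree d)
    (hA : (G.adjMatrix ℝ).IsHermitian) (j : V) : hA.eigenvalues j ≤ d := by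
  set v : V → ℝ := ⇑(hA.eigenvectorBasis j)
  have hlap : G.lapMatrix ℝ *ᵥ v = (d - hA.eigenvalues j) • v := by
    ext i
    simp [lapMatrix, sub_mulVec, degMatrix_mulVec_apply, hreg i, v,
      hA.mulVec_eigenvectorBasis j, sub_mul]
  have hv : v ≠ 0 := (WithLp.ofLp_eq_zero 2).ne.2 <| hA.eigenvectorBasis.orthonormal.ne_zero j
  have hpos : 0 < v ⬝ᵥ v := by simpa using dotProduct_star_self_pos_iff.2 hv
  have := (G.posSemidef_lapMatrix ℝ).dotProduct_mulVec_nonneg v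
  rw [star_trivial, hlap, dotProduct_smul, smul_eq_mul] at this
  exact sub_nonneg.1 (nonneg_of_mul_nonneg_left this hpos)

theorem IsRegularOfDegree.trace_adjMatrix_sq (hreg : G.IsRegularOfDegree d) :
    (G.adjMatrix ℝ ^ 2).trace = Fintype.card V * d := by
  simp only [sq, trace, diag_apply, adjMatrix_mul_self_apply_self, hreg.degree_eq, sum_const,
    card_univ, nsmul_eq_mul]

theorem trace_adjMatrix_pow_nonneg (k : ℕ) : 0 ≤ (G.adjMatrix ℝ ^ k).trace :=
  Finset.sum_nonneg fun i _ => by simp [adjMatrix_pow_apply_eq_card_walk]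

end SimpleGraph

theorem sub_mul_sq_le_of_le {x L D α β : ℝ} (hx : x ≤ D) (hLD : L ≤ D) (hα : 0 ≤ α)
    (hαβ : 0 ≤ α * L + β) : (x - L) * (α * x + β) ^ 2 ≤ (D - L) * (α * D + β) ^ 2 := by
  rcases le_total x L with hxL | hLx
  · exact (mul_nonpos_of_nonpos_of_nonneg (by linarith) (sq_nonneg _)).trans
      (mul_nonneg (by linarith) (sq_nonneg _))
  · have h0 : 0 ≤ α * x + β := by nlinarith
    have h1 : α * x + β ≤ α * D + β := by nlinarith
    exact mul_le_mul (by linarith) (pow_le_pow_left₀ h0 h1 2) (sq_nonneg _) (by linarith)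

theorem card_mul_le_of_moments {ι : Type*} [Fintype ι] {μ : ι → ℝ} {L D α β : ℝ} (i₀ : ι)
    (hμ : ∀ i ≠ i₀, μ i ≤ L) (hμ₀ : μ i₀ ≤ D) (hLD : L ≤ D) (hα : 0 ≤ α) (hαβ : 0 ≤ α * L + β)
    (h₁ : ∑ i, μ i = 0) (h₂ : ∑ i, μ i ^ 2 = Fintype.card ι * D) (h₃ : 0 ≤ ∑ i, μ i ^ 3) :
    Fintype.card ι * ((2 * α * β - L * α ^ 2) * D - L * β ^ 2) ≤ (D - L) * (α * D + β) ^ 2 := by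
  classical
  set p : ℝ → ℝ := fun x => (x - L) * (α * x + β) ^ 2
  have hsum : ∑ i, p (μ i) = α ^ 2 * ∑ i, μ i ^ 3
      + Fintype.card ι * ((2 * α * β - L * α ^ 2) * D - L * β ^ 2) := by
    have hexp : ∀ x, p x = α ^ 2 * x ^ 3 + (2 * α * β - L * α ^ 2) * x ^ 2
        + (β ^ 2 - 2 * α * β * L) * x - L * β ^ 2 := fun x => by ring
    simp only [hexp, sum_sub_distrib, sum_add_distrib, ← mul_sum, h₁, h₂, sum_const, card_univ,
      nsmul_eq_mul]
    ring
  have hrest : ∑ i ∈ univ.erase i₀, p (μ i) ≤ 0 :=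
    sum_nonpos fun i hi => mul_nonpos_of_nonpos_of_nonneg
      (sub_nonpos.2 (hμ i (mem_erase.1 hi).1)) (sq_nonneg _)
  have htop : p (μ i₀) ≤ p D := sub_mul_sq_le_of_le hμ₀ hLD hα hαβ
  rw [← add_sum_erase _ _ (mem_univ i₀)] at hsum
  nlinarith [mul_nonneg (sq_nonneg α) h₃]

theorem mul_sub_two_mul_sq_le_of_cubic_bound {n D L : ℝ} (hD : 1 ≤ D) (hL : 0 ≤ L)
    (hLD : 2 * L ^ 2 ≤ D)
    (h : n * ((2 * (1 + L) * D - L * (1 + L) ^ 2) * D - L * D ^ 2)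
      ≤ (D - L) * ((1 + L) * D + D) ^ 2) :
    n * (D - 2 * L ^ 2) ≤ 2 * D ^ 2 + L * (D - L) ^ 2 := by
  set w := 2 * D + D * L - L * (1 + L) ^ 2
  have hL_lt_D : L < D := by nlinarith
  have hgap : 0 ≤ D - 2 * L ^ 2 := by linarith
  have hw : 0 < w := by
    have : w = (D - 2 * L ^ 2) * (1 + L) + (D - L) + L ^ 3 := by ring
    rw [this]
    have := sub_pos.2 hL_lt_D
    positivity
  have hnw : n * w ≤ (D - L) * D * (2 + L) ^ 2 := by
    refine le_of_mul_le_mul_left ?_ (by linarith : (0 : ℝ) < D)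
    linarith
  have hratio :
      (D - 2 * L ^ 2) * ((D - L) * D * (2 + L) ^ 2) ≤ (2 * D ^ 2 + L * (D - L) ^ 2) * w := by
    have hD2L : L ≤ D ^ 2 := by nlinarith
    have hD2L2 : L ^ 2 ≤ D ^ 2 := by nlinarith
    have key : (2 * D ^ 2 + L * (D - L) ^ 2) * w - (D - 2 * L ^ 2) * ((D - L) * D * (2 + L) ^ 2)
        = L * (2 * D * (D - 2 * L ^ 2) + 3 * D * L * (D - L ^ 2) + 2 * L ^ 2 * (D ^ 2 - L ^ 2)
          + L ^ 2 * (D ^ 2 - L) + L ^ 3 * (D ^ 2 - L ^ 2)) := by ring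
    have : 0 ≤ D - L ^ 2 := by linarith
    have := sub_nonneg.2 hD2L
    have := sub_nonneg.2 hD2L2
    rw [← sub_nonneg, key]
    positivity
  refine le_of_mul_le_mul_right ?_ hw
  calc n * (D - 2 * L ^ 2) * w = (D - 2 * L ^ 2) * (n * w) := by ring
    _ ≤ (D - 2 * L ^ 2) * ((D - L) * D * (2 + L) ^ 2) := mul_le_mul_of_nonneg_left hnw hgap
    _ ≤ _ := hratio

/-- Let `G` be a `d`-regular simple graph on `n ≥ 2` vertices whose
adjacency-matrix eigenvalues, listed in decreasing order as `μ`, satisfy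
`0 ≤ λ₂ ≤ √(d/2)` where `λ₂ = μ 1`. Then
`λ₂ · ((d − λ₂)² + 2·n·λ₂) ≥ d·(n − 2d)`. -/
theorem stmt_9 (n d : ℕ) (hn : 2 ≤ n)
    (G : SimpleGraph (Fin n)) [DecidableRel G.Adj]
    (hreg : G.IsRegularOfDegree d)
    (hA : (G.adjMatrix ℝ).IsHermitian)
    (μ : Fin n → ℝ) (hμ : Antitone μ)
    (hperm : ∃ σ : Equiv.Perm (Fin n), μ = hA.eigenvalues ∘ σ)
    (hmu2_nonneg : 0 ≤ μ ⟨1, by omega⟩)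
    (hmu2_le : μ ⟨1, by omega⟩ ≤ Real.sqrt ((d : ℝ) / 2)) :
    μ ⟨1, by omega⟩ * (((d : ℝ) - μ ⟨1, by omega⟩) ^ 2 + 2 * n * μ ⟨1, by omega⟩)
      ≥ (d : ℝ) * ((n : ℝ) - 2 * d) := by
  obtain ⟨σ, hσ⟩ := hperm
  set L := μ ⟨1, by omega⟩
  rcases Nat.eq_zero_or_pos d with rfl | hd
  · have hL : L = 0 := le_antisymm (by simpa using hmu2_le) hmu2_nonneg
    simp [hL]
  have hL2 : 2 * L ^ 2 ≤ d := by
    have := Real.sq_sqrt (by positivity : (0 : ℝ) ≤ d / 2)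
    nlinarith [Real.sqrt_nonneg ((d : ℝ) / 2)]
  have hmoment (k : ℕ) : ∑ i, μ i ^ k = (G.adjMatrix ℝ ^ k).trace := by
    rw [hA.trace_pow_eq_sum_eigenvalues_pow, hσ]
    exact Equiv.sum_comp σ (fun j => hA.eigenvalues j ^ k)
  have hμ_le (i : Fin n) (hi : i ≠ ⟨0, by omega⟩) : μ i ≤ L :=
    hμ (Fin.le_def.2 (Nat.one_le_iff_ne_zero.2 fun h => hi (Fin.ext h)))
  have htop : μ ⟨0, by omega⟩ ≤ d := by rw [hσ]; exact hreg.eigenvalues_adjMatrix_le hA _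
  have hL_le : L ≤ d := (hμ (Fin.mk_le_mk.2 zero_le_one)).trans htop
  have hsum := card_mul_le_of_moments (μ := μ) (α := 1 + L) (β := d) _ hμ_le htop hL_le
    (by positivity) (by positivity)
    (by simpa using hmoment 1) (by rw [hmoment, hreg.trace_adjMatrix_sq])
    (by rw [hmoment]; exact SimpleGraph.trace_adjMatrix_pow_nonneg 3)
  rw [Fintype.card_fin] at hsum
  have := mul_sub_two_mul_sq_le_of_cubic_bound (by exact_mod_cast hd) hmu2_nonneg hL2 hsum
  linarith
end

section
/- Let G be a d-regular simple graph on n vertices with 1 ≤ d and d/n < 1/2, with adjacency-matrix eigenvalues λ₁ ≥ λ₂ ≥ ⋯ ≥ λₙ satisfying λ₂ ≥ 0, and set p = d/n. Then (λ₂ + p)² ≥ (1 − 2p)·|λₙ| + p². -/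
/-!
With `β = (d - λ₂) / n` and `J` the all-ones matrix, `N = λ₂ I - A + β J` is positive
semidefinite: in an eigenbasis of `A` the all-ones vector only meets eigenvalues equal to `d`,
and every eigenvalue other than the top one is at most `λ₂`. As `A` is a `0/1` matrix with zero
diagonal, the Hadamard square `N ⊙ N = (λ₂² + 2 λ₂ β) I + β² J + (1 - 2β) A` is positive
semidefinite by the Schur product theorem. At a unit eigenvector of `λₙ`, which is orthogonal to the all-ones
vector, its quadratic form is `λ₂² + 2 λ₂ β + (1 - 2β) λₙ ≥ 0`. Since `λₙ ≤ 0` (the trace of `A`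
vanishes) and `β = p - λ₂ / n ≤ p`, replacing `β` by `p` only adds `2 (λ₂ / n) (λ₂ - λₙ) ≥ 0`.
-/

open Matrix Finset

lemma sum_sub_mul_sq_add_div_mul_sq_nonneg {ι : Type*} [Fintype ι] [DecidableEq ι]
    {lam c e : ι → ℝ} {s d : ℝ} {i₀ : ι} (hs : ∀ i ≠ i₀, lam i ≤ s) (hi₀ : lam i₀ ≤ d)
    (hsd : s ≤ d) (he : ∀ i, e i ≠ 0 → lam i = d) (he₀ : e ≠ 0) :
    0 ≤ ∑ i, (s - lam i) * c i ^ 2 + (d - s) / (∑ i, e i ^ 2) * (∑ i, e i * c i) ^ 2 := by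
  rcases hsd.eq_or_lt with rfl | hsd
  · rw [sub_self, zero_div, zero_mul, add_zero]
    refine sum_nonneg fun i _ => mul_nonneg ?_ (sq_nonneg _)
    rcases eq_or_ne i i₀ with rfl | hi
    exacts [sub_nonneg.2 hi₀, sub_nonneg.2 (hs i hi)]
  have he_eq : ∀ i ≠ i₀, e i = 0 := fun i hi => by
    by_contra h
    linarith [he i h, hs i hi]
  have hei₀ : e i₀ ≠ 0 := fun h => he₀ <| funext fun i => by
    rcases eq_or_ne i i₀ with rfl | hi
    exacts [h, he_eq i hi]
  have hsum : ∀ f : ι → ℝ, ∑ i, e i * f i = e i₀ * f i₀ := fun f =>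
    sum_eq_single i₀ (fun i _ hi => by rw [he_eq i hi, zero_mul]) (by simp)
  have hrest : 0 ≤ ∑ i ∈ univ.erase i₀, (s - lam i) * c i ^ 2 :=
    sum_nonneg fun i hi => mul_nonneg (sub_nonneg.2 (hs i (ne_of_mem_erase hi))) (sq_nonneg _)
  rw [← add_sum_erase _ _ (mem_univ i₀), he i₀ hei₀]
  simp only [sq (e _), hsum, mul_pow]
  field_simp
  linarith [show (s - d) * c i₀ ^ 2 + c i₀ ^ 2 * (d - s) = 0 by ring]

namespace Matrix.IsHermitian

variable {n : Type*} [Fintype n] [DecidableEq n] {A : Matrix n n ℝ} (hA : A.IsHermitian)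

lemma dotProduct_eq_sum_eigenvectorBasis (u w : n → ℝ) :
    u ⬝ᵥ w = ∑ i, (⇑(hA.eigenvectorBasis i) ⬝ᵥ u) * (⇑(hA.eigenvectorBasis i) ⬝ᵥ w) := by
  have := hA.eigenvectorBasis.sum_inner_mul_inner (WithLp.toLp 2 u) (WithLp.toLp 2 w)
  simp only [EuclideanSpace.inner_eq_star_dotProduct, star_trivial] at this
  rw [dotProduct_comm u w, ← this]
  exact sum_congr rfl fun i _ => by rw [dotProduct_comm w]

lemma eigenvectorBasis_dotProduct_mulVec (i : n) (w : n → ℝ) :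
    ⇑(hA.eigenvectorBasis i) ⬝ᵥ (A *ᵥ w) =
      hA.eigenvalues i * (⇑(hA.eigenvectorBasis i) ⬝ᵥ w) := by
  rw [dotProduct_mulVec, ← mulVec_transpose, ← conjTranspose_eq_transpose_of_trivial, hA,
    mulVec_eigenvectorBasis, smul_dotProduct, smul_eq_mul]

lemma dotProduct_mulVec_eq_sum_eigenvalues (u w : n → ℝ) :
    u ⬝ᵥ (A *ᵥ w) = ∑ i, hA.eigenvalues i *
      ((⇑(hA.eigenvectorBasis i) ⬝ᵥ u) * (⇑(hA.eigenvectorBasis i) ⬝ᵥ w)) := by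
  rw [hA.dotProduct_eq_sum_eigenvectorBasis]
  exact sum_congr rfl fun i _ => by rw [eigenvectorBasis_dotProduct_mulVec]; ring

lemma eigenvectorBasis_dotProduct_self (i : n) :
    ⇑(hA.eigenvectorBasis i) ⬝ᵥ ⇑(hA.eigenvectorBasis i) = 1 := by
  have h := hA.eigenvectorBasis.inner_eq_one i
  rwa [EuclideanSpace.inner_eq_star_dotProduct, star_trivial] at h

lemma dotProduct_smul_one_sub_add_smul_vecMulVec_mulVec (s β : ℝ) (v w : n → ℝ) :
    w ⬝ᵥ ((s • 1 - A + β • vecMulVec v v) *ᵥ w) =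
      s * (w ⬝ᵥ w) - w ⬝ᵥ (A *ᵥ w) + β * (v ⬝ᵥ w) ^ 2 := by
  simp only [add_mulVec, sub_mulVec, smul_mulVec, one_mulVec, vecMulVec_mulVec, dotProduct_add,
    dotProduct_sub, dotProduct_smul, smul_eq_mul, MulOpposite.smul_eq_mul_unop, MulOpposite.unop_op]
  rw [dotProduct_comm w v]
  ring

theorem posSemidef_smul_one_sub_add_smul_vecMulVec {s d : ℝ} {v : n → ℝ} (hv : A *ᵥ v = d • v)
    (hv₀ : v ≠ 0) {i₀ : n} (hs : ∀ i ≠ i₀, hA.eigenvalues i ≤ s) (hi₀ : hA.eigenvalues i₀ ≤ d)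
    (hsd : s ≤ d) : (s • 1 - A + ((d - s) / (v ⬝ᵥ v)) • vecMulVec v v).PosSemidef := by
  refine .of_dotProduct_mulVec_nonneg ?_ fun w => ?_
  · have hvv : (vecMulVec v v).IsHermitian := by
      simpa using (posSemidef_vecMulVec_self_star v).isHermitian
    exact ((isHermitian_one.smul (.all s)).sub hA).add (hvv.smul (.all _))
  have he : ∀ i, ⇑(hA.eigenvectorBasis i) ⬝ᵥ v ≠ 0 → hA.eigenvalues i = d := fun i hi =>
    mul_right_cancel₀ hi <| by
      rw [← hA.eigenvectorBasis_dotProduct_mulVec, hv, dotProduct_smul, smul_eq_mul]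
  have he₀ : (fun i => ⇑(hA.eigenvectorBasis i) ⬝ᵥ v) ≠ 0 := fun h =>
    hv₀ <| dotProduct_self_eq_zero.1 <| by
      simp [hA.dotProduct_eq_sum_eigenvectorBasis v v, congrFun h]
  have key := sum_sub_mul_sq_add_div_mul_sq_nonneg
    (c := fun i => ⇑(hA.eigenvectorBasis i) ⬝ᵥ w) hs hi₀ hsd he he₀
  rw [star_trivial, dotProduct_smul_one_sub_add_smul_vecMulVec_mulVec,
    hA.dotProduct_mulVec_eq_sum_eigenvalues, hA.dotProduct_eq_sum_eigenvectorBasis w w,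
    hA.dotProduct_eq_sum_eigenvectorBasis v v, hA.dotProduct_eq_sum_eigenvectorBasis v w,
    mul_sum, ← sum_sub_distrib]
  simpa only [sq, sub_mul] using key

end Matrix.IsHermitian

namespace SimpleGraph

variable {V : Type*} (G : SimpleGraph V) [DecidableRel G.Adj]

lemma hadamard_smul_one_sub_adjMatrix_add_smul_vecMulVec [DecidableEq V] {R : Type*} [CommRing R]
    (s β : R) :
    (s • 1 - G.adjMatrix R + β • vecMulVec 1 1) ⊙ (s • 1 - G.adjMatrix R + β • vecMulVec 1 1) =
      (s ^ 2 + 2 * s * β) • 1 + β ^ 2 • vecMulVec 1 1 + (1 - 2 * β) • G.adjMatrix R := by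
  ext i j
  rcases eq_or_ne i j with rfl | hij
  · simp
    ring
  · by_cases h : G.Adj i j <;> simp [hij, h] <;> ring

variable {G} [Fintype V] {d : ℕ}

lemma IsRegularOfDegree.adjMatrix_mulVec_one (hreg : G.IsRegularOfDegree d) :
    G.adjMatrix ℝ *ᵥ 1 = (d : ℝ) • 1 := by
  ext v
  simpa using adjMatrix_mulVec_const_apply_of_regular (a := (1 : ℝ)) hreg (v := v)

variable [DecidableEq V]

lemma IsRegularOfDegree.lapMatrix_eq_smul_one_sub_adjMatrix (hreg : G.IsRegularOfDegree d) :
    G.lapMatrix ℝ = (d : ℝ) • 1 - G.adjMatrix ℝ := by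
  ext i j
  simp [lapMatrix, degMatrix, diagonal, hreg i, one_apply]

lemma IsRegularOfDegree.eigenvalues_le (hreg : G.IsRegularOfDegree d)
    (hA : (G.adjMatrix ℝ).IsHermitian) (i : V) : hA.eigenvalues i ≤ d := by
  have h := (G.posSemidef_lapMatrix ℝ).dotProduct_mulVec_nonneg (hA.eigenvectorBasis i)
  rwa [star_trivial, hreg.lapMatrix_eq_smul_one_sub_adjMatrix, sub_mulVec, dotProduct_sub,
    smul_mulVec, one_mulVec, dotProduct_smul, hA.eigenvectorBasis_dotProduct_mulVec, hA.eigenvectorBasis_dotProduct_self,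
    smul_eq_mul, mul_one, mul_one, sub_nonneg] at h

lemma IsRegularOfDegree.one_dotProduct_eigenvectorBasis (hreg : G.IsRegularOfDegree d)
    (hA : (G.adjMatrix ℝ).IsHermitian) {k : V} (hk : hA.eigenvalues k ≠ d) :
    1 ⬝ᵥ ⇑(hA.eigenvectorBasis k) = 0 := by
  have h := hA.eigenvectorBasis_dotProduct_mulVec k 1
  rw [hreg.adjMatrix_mulVec_one, dotProduct_smul, smul_eq_mul] at h
  rw [dotProduct_comm]
  exact (mul_eq_mul_right_iff.1 h).resolve_left (Ne.symm hk)

theorem IsRegularOfDegree.sq_add_mul_eigenvalue_nonneg (hreg : G.IsRegularOfDegree d)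
    (hA : (G.adjMatrix ℝ).IsHermitian) {s β : ℝ} {i₀ : V} (hs : ∀ i ≠ i₀, hA.eigenvalues i ≤ s)
    (hsd : s ≤ d) (hβ : β = (d - s) / Fintype.card V) {k : V} (hk : hA.eigenvalues k ≠ d) :
    0 ≤ s ^ 2 + 2 * s * β + (1 - 2 * β) * hA.eigenvalues k := by
  have hN := hA.posSemidef_smul_one_sub_add_smul_vecMulVec hreg.adjMatrix_mulVec_one
    (fun h => one_ne_zero (congrFun h i₀)) hs (hreg.eigenvalues_le hA i₀) hsd
  rw [one_dotProduct_one, ← hβ] at hN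
  have h := (hN.hadamard hN).dotProduct_mulVec_nonneg (hA.eigenvectorBasis k)
  rw [star_trivial, G.hadamard_smul_one_sub_adjMatrix_add_smul_vecMulVec] at h
  simp only [add_mulVec, smul_mulVec, one_mulVec, vecMulVec_mulVec, dotProduct_add,
    dotProduct_smul, smul_eq_mul, MulOpposite.smul_eq_mul_unop, MulOpposite.unop_op,
    hreg.one_dotProduct_eigenvectorBasis hA hk, hA.eigenvectorBasis_dotProduct_self,
    hA.eigenvectorBasis_dotProduct_mulVec] at h
  linarith

end SimpleGraph

/-- Let `G` be a `d`-regular simple graph on `n ≥ 2` vertices with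
`1 ≤ d` and `d/n < 1/2`, with adjacency-matrix eigenvalues listed in decreasing order
as `μ` and satisfying `λ₂ = μ 1 ≥ 0`, and set `p = d/n`. Then, with `λₙ = μ (n-1)`
the smallest eigenvalue, `(λ₂ + p)² ≥ (1 − 2p)·|λₙ| + p²`. -/
theorem stmt_13 (n d : ℕ) (hn : 2 ≤ n) (hd : 1 ≤ d)
    (G : SimpleGraph (Fin n)) [DecidableRel G.Adj]
    (hreg : G.IsRegularOfDegree d)
    (hA : (G.adjMatrix ℝ).IsHermitian)
    (μ : Fin n → ℝ) (hμ : Antitone μ)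
    (hperm : ∃ σ : Equiv.Perm (Fin n), μ = hA.eigenvalues ∘ σ)
    (hmu2 : 0 ≤ μ ⟨1, by omega⟩)
    (p : ℝ) (hp : p = (d : ℝ) / n) :
    (μ ⟨1, by omega⟩ + p) ^ 2 ≥ (1 - 2 * p) * |μ ⟨n - 1, by omega⟩| + p ^ 2 := by
  obtain ⟨σ, rfl⟩ := hperm
  set s := hA.eigenvalues (σ ⟨1, by omega⟩)
  set m := hA.eigenvalues (σ ⟨n - 1, by omega⟩)
  have hs : ∀ i ≠ σ ⟨0, by omega⟩, hA.eigenvalues i ≤ s := fun i hi => by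
    simpa using hμ (show (⟨1, by omega⟩ : Fin n) ≤ σ.symm i by
      rw [Fin.le_def]
      exact Nat.one_le_iff_ne_zero.2 fun h => hi (σ.symm_apply_eq.1 (Fin.ext h)))
  have hm_le : ∀ i, m ≤ hA.eigenvalues i := fun i => by
    simpa using hμ (show σ.symm i ≤ ⟨n - 1, by omega⟩ by
      rw [Fin.le_def]; exact Nat.le_sub_one_of_lt (σ.symm i).isLt)
  have hm_nonpos : m ≤ 0 := by
    have htrace : ∑ i, hA.eigenvalues i ≤ ∑ _i : Fin n, (0 : ℝ) := by
      simpa [SimpleGraph.trace_adjMatrix] using (hA.trace_eq_sum_eigenvalues).symm.le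
    obtain ⟨i, -, hi⟩ := exists_le_of_sum_le ⟨⟨0, by omega⟩, mem_univ _⟩ htrace
    exact (hm_le i).trans hi
  have hmd : m ≠ d := (hm_nonpos.trans_lt (Nat.cast_pos.2 hd)).ne
  have key := hreg.sq_add_mul_eigenvalue_nonneg hA hs (hreg.eigenvalues_le hA _) rfl hmd
  rw [Fintype.card_fin] at key
  have hslack : 0 ≤ s / n * (s - m) :=
    mul_nonneg (div_nonneg hmu2 n.cast_nonneg) (sub_nonneg.2 (hm_le _))
  simp only [Function.comp_apply]
  rw [abs_of_nonpos hm_nonpos, hp]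
  linarith [show (s + d / n) ^ 2 - ((1 - 2 * (d / n)) * -m + (d / n) ^ 2) =
    s ^ 2 + 2 * s * ((d - s) / n) + (1 - 2 * ((d - s) / n)) * m + 2 * (s / n * (s - m)) by ring]
end
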